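/- arXiv:1507.05608 — 7 statements merged into one kernel-verified Lean document; each statement's English description precedes it below -/
import Mathlib

section
/- Let n ≥ 1 and let · be a quasigroup operation of order n on Fin n, and let σ be a complete mapping of (Fin n, ·). Then the Bruck–Belousov prolongation ∗ of (Fin n, ·) along σ is a quasigroup operation of order n+1 on Fin (n+1); that is, for every a ∈ Fin (n+1) the maps x ↦ a∗x and x ↦ x∗a are bijections of Fin (n+1). -/
/-!
Every row and column of the prolonged square has `n + 1` cells, so it suffices to see that each
one hits every symbol. In the row of `x < n`, the symbol `x · σx` displaced from the cell
`(x, σx)` by `e` reappears in the new column `e`; in the column of `σx`, the displaced `x · σx`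
reappears in the new row `e`. The new row and column consist of `e` together with the values
`x · σx`, which cover `Fin n` because `σ` is a complete mapping.
-/

open Function

def IsQuasigroup {m : ℕ} (f : Fin m → Fin m → Fin m) : Prop :=
  ∀ a : Fin m, Function.Bijective (fun x => f a x) ∧ Function.Bijective (fun x => f x a)

theorem Fin.surjective_of_castSucc_of_last {α : Type*} {n : ℕ} {g : α → Fin (n + 1)}
    (hcast : ∀ c : Fin n, ∃ a, g a = c.castSucc) (hlast : ∃ a, g a = Fin.last n) :
    Surjective g :=
  fun z => Fin.lastCases hlast hcast z

structure IsBruckBelousovProlongation {n : ℕ} (f : Fin n → Fin n → Fin n)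
    (σ : Equiv.Perm (Fin n)) (star : Fin (n + 1) → Fin (n + 1) → Fin (n + 1)) : Prop where
  castSucc_castSucc : ∀ x y : Fin n, y ≠ σ x → star x.castSucc y.castSucc = (f x y).castSucc
  castSucc_apply : ∀ x : Fin n, star x.castSucc (σ x).castSucc = Fin.last n
  castSucc_last : ∀ x : Fin n, star x.castSucc (Fin.last n) = (f x (σ x)).castSucc
  last_apply : ∀ x : Fin n, star (Fin.last n) (σ x).castSucc = (f x (σ x)).castSucc
  last_last : star (Fin.last n) (Fin.last n) = Fin.last n

namespace IsBruckBelousovProlongation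

variable {n : ℕ} {f : Fin n → Fin n → Fin n} {σ : Equiv.Perm (Fin n)}
  {star : Fin (n + 1) → Fin (n + 1) → Fin (n + 1)}

theorem surjective_row_castSucc (h : IsBruckBelousovProlongation f σ star) {x : Fin n}
    (hx : Surjective (f x)) : Surjective (star x.castSucc) := by
  refine Fin.surjective_of_castSucc_of_last (fun c => ?_) ⟨_, h.castSucc_apply x⟩
  by_cases hc : c = f x (σ x)
  · exact ⟨Fin.last n, by rw [h.castSucc_last, hc]⟩
  · obtain ⟨y, rfl⟩ := hx c
    have hy : y ≠ σ x := by rintro rfl; exact hc rfl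
    exact ⟨y.castSucc, h.castSucc_castSucc x y hy⟩

theorem surjective_col_castSucc (h : IsBruckBelousovProlongation f σ star) {y : Fin n}
    (hy : Surjective (f · y)) : Surjective (star · y.castSucc) := by
  have hdiag : σ (σ.symm y) = y := σ.apply_symm_apply y
  refine Fin.surjective_of_castSucc_of_last (fun c => ?_)
    ⟨(σ.symm y).castSucc, by simpa only [hdiag] using h.castSucc_apply (σ.symm y)⟩
  by_cases hc : c = f (σ.symm y) y
  · exact ⟨Fin.last n, by simpa only [hdiag, hc] using h.last_apply (σ.symm y)⟩
  · obtain ⟨x, rfl⟩ := hy c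
    have hx : y ≠ σ x := by rintro rfl; exact hc (by rw [σ.symm_apply_apply])
    exact ⟨x.castSucc, h.castSucc_castSucc x y hx⟩

theorem surjective_row_last (h : IsBruckBelousovProlongation f σ star)
    (hσ : Surjective (fun x => f x (σ x))) : Surjective (star (Fin.last n)) := by
  refine Fin.surjective_of_castSucc_of_last (fun c => ?_) ⟨_, h.last_last⟩
  obtain ⟨x, rfl⟩ := hσ c
  exact ⟨(σ x).castSucc, h.last_apply x⟩

theorem surjective_col_last (h : IsBruckBelousovProlongation f σ star)
    (hσ : Surjective (fun x => f x (σ x))) : Surjective (star · (Fin.last n)) := by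
  refine Fin.surjective_of_castSucc_of_last (fun c => ?_) ⟨_, h.last_last⟩
  obtain ⟨x, rfl⟩ := hσ c
  exact ⟨x.castSucc, h.castSucc_last x⟩

theorem isQuasigroup (h : IsBruckBelousovProlongation f σ star) (hf : IsQuasigroup f)
    (hσ : Surjective (fun x => f x (σ x))) : IsQuasigroup star := by
  intro a
  simp only [← Finite.surjective_iff_bijective]
  induction a using Fin.lastCases with
  | last => exact ⟨h.surjective_row_last hσ, h.surjective_col_last hσ⟩
  | cast x =>
    exact ⟨h.surjective_row_castSucc (hf x).1.2, h.surjective_col_castSucc (hf x).2.2⟩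

end IsBruckBelousovProlongation

theorem bruck_belousov_prolongation_isQuasigroup_general
    (n : ℕ)
    (f : Fin n → Fin n → Fin n) (hf : IsQuasigroup f)
    (σ : Equiv.Perm (Fin n))
    (hσ : Function.Bijective (fun x => f x (σ x)))
    (star : Fin (n + 1) → Fin (n + 1) → Fin (n + 1))
    (h1 : ∀ x y : Fin n, y ≠ σ x →
      star x.castSucc y.castSucc = (f x y).castSucc)
    (h2 : ∀ x : Fin n, star x.castSucc (σ x).castSucc = Fin.last n)
    (h3 : ∀ x : Fin n, star x.castSucc (Fin.last n) = (f x (σ x)).castSucc)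
    (h4 : ∀ x : Fin n, star (Fin.last n) (σ x).castSucc = (f x (σ x)).castSucc)
    (h5 : star (Fin.last n) (Fin.last n) = Fin.last n) :
    IsQuasigroup star :=
  IsBruckBelousovProlongation.isQuasigroup ⟨h1, h2, h3, h4, h5⟩ hf hσ.2

/-- **Bruck–Belousov prolongation.**  Let `f` be a quasigroup operation of order
`n ≥ 1` on `Fin n` and `σ` a complete mapping of `(Fin n, f)` (i.e. `x ↦ f x (σ x)`
is a bijection).  Then the Bruck–Belousov prolongation `star` of `f` along `σ`
(characterized cell-by-cell by `h1`–`h5`, with `Fin n` identified with the first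
`n` elements of `Fin (n+1)` and `e = Fin.last n`) is a quasigroup operation of
order `n+1` on `Fin (n+1)`. -/
theorem bruck_belousov_prolongation_isQuasigroup
    (n : ℕ) (hn : 1 ≤ n)
    (f : Fin n → Fin n → Fin n) (hf : IsQuasigroup f)
    (σ : Equiv.Perm (Fin n))
    (hσ : Function.Bijective (fun x => f x (σ x)))
    (star : Fin (n + 1) → Fin (n + 1) → Fin (n + 1))
    (h1 : ∀ x y : Fin n, y ≠ σ x →
      star x.castSucc y.castSucc = (f x y).castSucc)
    (h2 : ∀ x : Fin n, star x.castSucc (σ x).castSucc = Fin.last n)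
    (h3 : ∀ x : Fin n, star x.castSucc (Fin.last n) = (f x (σ x)).castSucc)
    (h4 : ∀ x : Fin n, star (Fin.last n) (σ x).castSucc = (f x (σ x)).castSucc)
    (h5 : star (Fin.last n) (Fin.last n) = Fin.last n) :
    IsQuasigroup star :=
  bruck_belousov_prolongation_isQuasigroup_general n f hf σ hσ star h1 h2 h3 h4 h5
end

section
/- Let n ≥ 1, let · be a quasigroup operation of order n on Fin n, let σ be a complete mapping of (Fin n, ·), and let x₀ ∈ Fin n. Then the Belyavskaya prolongation ∗ of (Fin n, ·) along σ with excluded element x₀ is a quasigroup operation of order n+1 on Fin (n+1); that is, for every a ∈ Fin (n+1) the maps x ↦ a∗x and x ↦ x∗a are bijections of Fin (n+1). -/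
/-!
Every row and every column of the prolongation is obtained from a bijection `g` of `Fin n`
(a row or column of `·`, or the complete mapping `x ↦ x · σx`, suitably reindexed) by adjoining
`e` as a fixed point, possibly followed by the transposition of `e` with one value `g c`;
both constructions give bijections of `Fin (n+1)`.
-/

open Function

namespace Fin

variable {n : ℕ} {F : Fin (n + 1) → Fin (n + 1)} {g : Fin n → Fin n}

theorem bijective_of_apply_last_eq_last (hg : Bijective g) (hlast : F (last n) = last n)
    (hcast : ∀ y, F y.castSucc = (g y).castSucc) : Bijective F := by
  refine Finite.injective_iff_bijective.mp fun a b hab => ?_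
  induction a using lastCases <;> induction b using lastCases <;>
    simp_all [castSucc_ne_last, hg.injective.eq_iff]

theorem bijective_of_apply_last_eq_castSucc (hg : Bijective g) {c : Fin n}
    (hlast : F (last n) = (g c).castSucc) (hc : F c.castSucc = last n)
    (hcast : ∀ y ≠ c, F y.castSucc = (g y).castSucc) : Bijective F := by
  set τ := Equiv.swap (last n) (g c).castSucc
  refine (Equiv.comp_bijective F τ).mp (bijective_of_apply_last_eq_last hg ?_ fun y => ?_)
  · simp [τ, hlast]
  · rcases eq_or_ne y c with rfl | hy
    · simp [τ, hc]
    · have hgy : (g y).castSucc ≠ (g c).castSucc := by simpa using hg.injective.ne hy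
      simp [τ, hcast y hy, Equiv.swap_apply_of_ne_of_ne (castSucc_ne_last _) hgy]

end Fin

open Fin

/-- The cell-by-cell description of the Belyavskaya prolongation of `f` along `σ` with excluded
element `x₀`, with `Fin n` embedded in `Fin (n+1)` by `castSucc` and `e = last n`. -/
structure IsBelyavskayaProlongation {n : ℕ} (f : Fin n → Fin n → Fin n) (σ : Equiv.Perm (Fin n))
    (x₀ : Fin n) (star : Fin (n + 1) → Fin (n + 1) → Fin (n + 1)) : Prop where
  apply_of_ne : ∀ x y, y ≠ σ x → star x.castSucc y.castSucc = (f x y).castSucc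
  apply_graph : ∀ x, x ≠ x₀ → star x.castSucc (σ x).castSucc = last n
  apply_last_right : ∀ x, x ≠ x₀ → star x.castSucc (last n) = (f x (σ x)).castSucc
  apply_last_left : ∀ x, x ≠ x₀ → star (last n) (σ x).castSucc = (f x (σ x)).castSucc
  apply_graph_x₀ : star x₀.castSucc (σ x₀).castSucc = (f x₀ (σ x₀)).castSucc
  apply_x₀_last : star x₀.castSucc (last n) = last n
  apply_last_graph_x₀ : star (last n) (σ x₀).castSucc = last n
  apply_last_last : star (last n) (last n) = (f x₀ (σ x₀)).castSucc

namespace IsBelyavskayaProlongation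

variable {n : ℕ} {f : Fin n → Fin n → Fin n} {σ : Equiv.Perm (Fin n)} {x₀ : Fin n}
  {star : Fin (n + 1) → Fin (n + 1) → Fin (n + 1)}

theorem bijective_left (hP : IsBelyavskayaProlongation f σ x₀ star)
    (hf : ∀ a, Bijective (f a)) (hσ : Bijective fun x => f x (σ x)) (a : Fin (n + 1)) :
    Bijective (star a) := by
  induction a using lastCases with
  | last =>
    -- the row of `e` is the complete mapping read along `σ`
    refine bijective_of_apply_last_eq_castSucc (g := (fun x => f x (σ x)) ∘ σ.symm) (c := σ x₀)
      (hσ.comp σ.symm.bijective) (by simpa using hP.apply_last_last) hP.apply_last_graph_x₀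
      fun y hy => ?_
    obtain ⟨x, rfl⟩ := σ.surjective y
    simpa using hP.apply_last_left x (by rintro rfl; exact hy rfl)
  | cast x =>
    rcases eq_or_ne x x₀ with rfl | hx
    · refine bijective_of_apply_last_eq_last (hf x) hP.apply_x₀_last fun y => ?_
      rcases eq_or_ne y (σ x) with rfl | hy
      · exact hP.apply_graph_x₀
      · exact hP.apply_of_ne x y hy
    · exact bijective_of_apply_last_eq_castSucc (hf x) (hP.apply_last_right x hx)
        (hP.apply_graph x hx) (hP.apply_of_ne x)

theorem bijective_right (hP : IsBelyavskayaProlongation f σ x₀ star)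
    (hf : ∀ a, Bijective (f · a)) (hσ : Bijective fun x => f x (σ x)) (a : Fin (n + 1)) :
    Bijective (star · a) := by
  induction a using lastCases with
  | last =>
    exact bijective_of_apply_last_eq_castSucc hσ hP.apply_last_last hP.apply_x₀_last
      hP.apply_last_right
  | cast y =>
    obtain ⟨b, rfl⟩ := σ.surjective y
    have hP_col : ∀ x ≠ b, star x.castSucc (σ b).castSucc = (f x (σ b)).castSucc :=
      fun x hx => hP.apply_of_ne x (σ b) (σ.injective.ne hx.symm)
    rcases eq_or_ne b x₀ with rfl | hb
    · refine bijective_of_apply_last_eq_last (hf (σ b)) hP.apply_last_graph_x₀ fun x => ?_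
      rcases eq_or_ne x b with rfl | hx
      · exact hP.apply_graph_x₀
      · exact hP_col x hx
    · exact bijective_of_apply_last_eq_castSucc (hf (σ b)) (hP.apply_last_left b hb)
        (hP.apply_graph b hb) hP_col

end IsBelyavskayaProlongation

theorem belyavskaya_prolongation_isQuasigroup_general
    (n : ℕ)
    (f : Fin n → Fin n → Fin n) (hf : IsQuasigroup f)
    (σ : Equiv.Perm (Fin n))
    (hσ : Function.Bijective (fun x => f x (σ x)))
    (x₀ : Fin n)
    (star : Fin (n + 1) → Fin (n + 1) → Fin (n + 1))
    (h1 : ∀ x y : Fin n, y ≠ σ x →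
      star x.castSucc y.castSucc = (f x y).castSucc)
    (h2 : ∀ x : Fin n, x ≠ x₀ → star x.castSucc (σ x).castSucc = Fin.last n)
    (h3 : ∀ x : Fin n, x ≠ x₀ →
      star x.castSucc (Fin.last n) = (f x (σ x)).castSucc)
    (h4 : ∀ x : Fin n, x ≠ x₀ →
      star (Fin.last n) (σ x).castSucc = (f x (σ x)).castSucc)
    (h5 : star x₀.castSucc (σ x₀).castSucc = (f x₀ (σ x₀)).castSucc)
    (h6 : star x₀.castSucc (Fin.last n) = Fin.last n)
    (h7 : star (Fin.last n) (σ x₀).castSucc = Fin.last n)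
    (h8 : star (Fin.last n) (Fin.last n) = (f x₀ (σ x₀)).castSucc) :
    IsQuasigroup star := by
  have hP : IsBelyavskayaProlongation f σ x₀ star := ⟨h1, h2, h3, h4, h5, h6, h7, h8⟩
  exact fun a => ⟨hP.bijective_left (fun b => (hf b).1) hσ a,
    hP.bijective_right (fun b => (hf b).2) hσ a⟩

/-- **Belyavskaya prolongation.**  Let `f` be a quasigroup operation of order
`n ≥ 1` on `Fin n`, `σ` a complete mapping of `(Fin n, f)` (i.e. `x ↦ f x (σ x)`
is a bijection), and `x₀ ∈ Fin n`.  Then the Belyavskaya prolongation `star` of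
`f` along `σ` with excluded element `x₀` (characterized cell-by-cell by
`h1`–`h8`, with `Fin n` identified with the first `n` elements of `Fin (n+1)`
and `e = Fin.last n`) is a quasigroup operation of order `n+1` on `Fin (n+1)`. -/
theorem belyavskaya_prolongation_isQuasigroup
    (n : ℕ) (hn : 1 ≤ n)
    (f : Fin n → Fin n → Fin n) (hf : IsQuasigroup f)
    (σ : Equiv.Perm (Fin n))
    (hσ : Function.Bijective (fun x => f x (σ x)))
    (x₀ : Fin n)
    (star : Fin (n + 1) → Fin (n + 1) → Fin (n + 1))
    (h1 : ∀ x y : Fin n, y ≠ σ x →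
      star x.castSucc y.castSucc = (f x y).castSucc)
    (h2 : ∀ x : Fin n, x ≠ x₀ → star x.castSucc (σ x).castSucc = Fin.last n)
    (h3 : ∀ x : Fin n, x ≠ x₀ →
      star x.castSucc (Fin.last n) = (f x (σ x)).castSucc)
    (h4 : ∀ x : Fin n, x ≠ x₀ →
      star (Fin.last n) (σ x).castSucc = (f x (σ x)).castSucc)
    (h5 : star x₀.castSucc (σ x₀).castSucc = (f x₀ (σ x₀)).castSucc)
    (h6 : star x₀.castSucc (Fin.last n) = Fin.last n)
    (h7 : star (Fin.last n) (σ x₀).castSucc = Fin.last n)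
    (h8 : star (Fin.last n) (Fin.last n) = (f x₀ (σ x₀)).castSucc) :
    IsQuasigroup star :=
  belyavskaya_prolongation_isQuasigroup_general n f hf σ hσ x₀ star h1 h2 h3 h4 h5 h6 h7 h8
end

section
/- Let n ≥ 1, let · be a quasigroup operation of order n on Fin n, and let σ be a quasicomplete mapping of (Fin n, ·) with special element a, where σ̄x₁ = σ̄x₂ for distinct x₁, x₂ ∈ Fin n (here σ̄x = x·σx). Identify Fin n with the first n elements of Fin (n+1), write e for the last element of Fin (n+1), and define a binary operation ∗ on Fin (n+1) by: x∗y = x·y for x, y < n with y ≠ σx; for x < n with x ≠ x₂: x∗(σx) = e, x∗e = σ̄x, and e∗(σx) = σ̄x; x₂∗(σx₂) = σ̄x₂; x₂∗e = e; e∗(σx₂) = e; and e∗e = a. Then ∗ is a quasigroup operation of order n+1 on Fin (n+1); that is, for every b ∈ Fin (n+1) the maps x ↦ b∗x and x ↦ x∗b are bijections of Fin (n+1). (Derienko–Dudek prolongation.) -/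
/-!
Every row and column of the prolongation is obtained from a row or column of `f` in one of
three ways: by appending the value `e` in the new cell; by additionally swapping the cell
`σ x` (resp. `σ⁻¹ y`) with the new cell; or, for the new row and column, by listing the values
`σ̄ x`, which cover everything but `a`, while the cell of `x₂` (whose value `σ̄ x₂ = σ̄ x₁` is
already taken) receives `e` and the corner receives `a`. Each of these maps is onto, hence
bijective on a finite set.
-/

theorem isQuasigroup_of_surjective {m : ℕ} (f : Fin m → Fin m → Fin m)
    (hleft : ∀ a, Function.Surjective (fun x => f a x))
    (hright : ∀ a, Function.Surjective (fun x => f x a)) : IsQuasigroup f := fun a =>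
  ⟨Finite.surjective_iff_bijective.mp (hleft a), Finite.surjective_iff_bijective.mp (hright a)⟩

theorem exists_ne_and_apply_eq_of_mem_range {α β : Type*} {g : α → β} {x₁ x₂ : α}
    (hx12 : x₁ ≠ x₂) (hval : g x₁ = g x₂) {d : β} (hd : d ∈ Set.range g) :
    ∃ x, x ≠ x₂ ∧ g x = d := by
  obtain ⟨x, rfl⟩ := hd
  rcases eq_or_ne x x₂ with rfl | hx
  · exact ⟨x₁, hx12, hval⟩
  · exact ⟨x, hx, rfl⟩

namespace Fin

variable {n : ℕ} {h : Fin (n + 1) → Fin (n + 1)} {g : Fin n → Fin n}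

theorem surjective_of_castSucc_eq_of_last_eq (hg : Function.Surjective g)
    (hcast : ∀ y, h y.castSucc = (g y).castSucc) (hlast : h (last n) = last n) :
    Function.Surjective h := by
  intro b
  induction b using lastCases with
  | last => exact ⟨last n, hlast⟩
  | cast d =>
    obtain ⟨y, rfl⟩ := hg d
    exact ⟨y.castSucc, hcast y⟩

theorem surjective_of_castSucc_eq_of_ne (hg : Function.Surjective g) (y₀ : Fin n)
    (hcast : ∀ y, y ≠ y₀ → h y.castSucc = (g y).castSucc)
    (hy₀ : h y₀.castSucc = last n) (hlast : h (last n) = (g y₀).castSucc) :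
    Function.Surjective h := by
  -- `h` is the extension of `g` by `last ↦ last`, precomposed with a transposition
  set s := Equiv.swap y₀.castSucc (last n)
  refine Function.Surjective.of_comp (g := s) (surjective_of_castSucc_eq_of_last_eq hg ?_ ?_)
  · intro y
    rcases eq_or_ne y y₀ with rfl | hy
    · simp [s, hlast]
    · simp [s, Equiv.swap_apply_of_ne_of_ne (castSucc_injective n |>.ne hy)
        (castSucc_ne_last y), hcast y hy]
  · simp [s, hy₀]

theorem surjective_of_range_eq_compl (τ : Fin n → Fin n) {a : Fin n} {x₁ x₂ : Fin n}
    (hrange : Set.range g = {a}ᶜ) (hx12 : x₁ ≠ x₂) (hval : g x₁ = g x₂)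
    (hcast : ∀ x, x ≠ x₂ → h (τ x).castSucc = (g x).castSucc)
    (hx₂ : h (τ x₂).castSucc = last n) (hlast : h (last n) = a.castSucc) :
    Function.Surjective h := by
  intro b
  induction b using lastCases with
  | last => exact ⟨_, hx₂⟩
  | cast d =>
    rcases eq_or_ne d a with rfl | hd
    · exact ⟨last n, hlast⟩
    · have hd' : d ∈ Set.range g := by rwa [hrange]
      obtain ⟨x, hx, rfl⟩ := exists_ne_and_apply_eq_of_mem_range hx12 hval hd'
      exact ⟨_, hcast x hx⟩

end Fin

theorem derienko_dudek_prolongation_isQuasigroup_general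
    (n : ℕ)
    (f : Fin n → Fin n → Fin n) (hf : IsQuasigroup f)
    (σ : Equiv.Perm (Fin n))
    (a : Fin n)
    (hrange : Set.range (fun x => f x (σ x)) = {a}ᶜ)
    (x₁ x₂ : Fin n) (hx12 : x₁ ≠ x₂)
    (hval : f x₁ (σ x₁) = f x₂ (σ x₂))
    (star : Fin (n + 1) → Fin (n + 1) → Fin (n + 1))
    (h1 : ∀ x y : Fin n, y ≠ σ x →
      star x.castSucc y.castSucc = (f x y).castSucc)
    (h2 : ∀ x : Fin n, x ≠ x₂ → star x.castSucc (σ x).castSucc = Fin.last n)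
    (h3 : ∀ x : Fin n, x ≠ x₂ →
      star x.castSucc (Fin.last n) = (f x (σ x)).castSucc)
    (h4 : ∀ x : Fin n, x ≠ x₂ →
      star (Fin.last n) (σ x).castSucc = (f x (σ x)).castSucc)
    (h5 : star x₂.castSucc (σ x₂).castSucc = (f x₂ (σ x₂)).castSucc)
    (h6 : star x₂.castSucc (Fin.last n) = Fin.last n)
    (h7 : star (Fin.last n) (σ x₂).castSucc = Fin.last n)
    (h8 : star (Fin.last n) (Fin.last n) = a.castSucc) :
    IsQuasigroup star := by
  refine isQuasigroup_of_surjective star (fun b => ?_) (fun b => ?_)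
  · induction b using Fin.lastCases with
    | last => exact Fin.surjective_of_range_eq_compl σ hrange hx12 hval h4 h7 h8
    | cast c =>
      rcases eq_or_ne c x₂ with rfl | hc
      · refine Fin.surjective_of_castSucc_eq_of_last_eq (hf c).1.surjective (fun y => ?_) h6
        rcases eq_or_ne y (σ c) with rfl | hy
        exacts [h5, h1 c y hy]
      · exact Fin.surjective_of_castSucc_eq_of_ne (hf c).1.surjective (σ c) (h1 c) (h2 c hc)
          (h3 c hc)
  · induction b using Fin.lastCases with
    | last => exact Fin.surjective_of_range_eq_compl id hrange hx12 hval h3 h6 h8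
    | cast c =>
      obtain ⟨x₀, rfl⟩ := σ.surjective c
      rcases eq_or_ne x₀ x₂ with rfl | hx₀
      · refine Fin.surjective_of_castSucc_eq_of_last_eq (hf (σ x₀)).2.surjective (fun x => ?_) h7
        rcases eq_or_ne x x₀ with rfl | hx
        exacts [h5, h1 x _ (σ.injective.ne hx).symm]
      · exact Fin.surjective_of_castSucc_eq_of_ne (hf (σ x₀)).2.surjective x₀
          (fun x hx => h1 x _ (σ.injective.ne hx).symm) (h2 x₀ hx₀) (h4 x₀ hx₀)

/-- **Derienko–Dudek prolongation.**  Let `f` be a quasigroup operation of order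
`n ≥ 1` on `Fin n` and `σ` a quasicomplete mapping of `(Fin n, f)`: the image of
the conjugated mapping `σ̄ x = f x (σ x)` is all of `Fin n` except the special
element `a`, and `σ̄ x₁ = σ̄ x₂` for distinct `x₁, x₂`.  Then the Derienko–Dudek
prolongation `star` (characterized cell-by-cell by `h1`–`h8`, with `Fin n`
identified with the first `n` elements of `Fin (n+1)`, `e = Fin.last n`, and
`e ∗ e = a`) is a quasigroup operation of order `n+1` on `Fin (n+1)`. -/
theorem derienko_dudek_prolongation_isQuasigroup
    (n : ℕ) (hn : 1 ≤ n)
    (f : Fin n → Fin n → Fin n) (hf : IsQuasigroup f)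
    (σ : Equiv.Perm (Fin n))
    (a : Fin n)
    (hrange : Set.range (fun x => f x (σ x)) = {a}ᶜ)
    (x₁ x₂ : Fin n) (hx12 : x₁ ≠ x₂)
    (hval : f x₁ (σ x₁) = f x₂ (σ x₂))
    (star : Fin (n + 1) → Fin (n + 1) → Fin (n + 1))
    (h1 : ∀ x y : Fin n, y ≠ σ x →
      star x.castSucc y.castSucc = (f x y).castSucc)
    (h2 : ∀ x : Fin n, x ≠ x₂ → star x.castSucc (σ x).castSucc = Fin.last n)
    (h3 : ∀ x : Fin n, x ≠ x₂ →
      star x.castSucc (Fin.last n) = (f x (σ x)).castSucc)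
    (h4 : ∀ x : Fin n, x ≠ x₂ →
      star (Fin.last n) (σ x).castSucc = (f x (σ x)).castSucc)
    (h5 : star x₂.castSucc (σ x₂).castSucc = (f x₂ (σ x₂)).castSucc)
    (h6 : star x₂.castSucc (Fin.last n) = Fin.last n)
    (h7 : star (Fin.last n) (σ x₂).castSucc = Fin.last n)
    (h8 : star (Fin.last n) (Fin.last n) = a.castSucc) :
    IsQuasigroup star :=
  derienko_dudek_prolongation_isQuasigroup_general n f hf σ a hrange x₁ x₂ hx12 hval star h1 h2 h3
    h4 h5 h6 h7 h8
end

section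
/- Let n ≥ 1, k ≥ 1, let · be a quasigroup operation of order n on Fin n, and let σ₀, …, σ_{k−1} be pairwise disjoint complete mappings of (Fin n, ·) (that is, each σᵢ is a complete mapping and σᵢx ≠ σⱼx for all x ∈ Fin n whenever i ≠ j). Let ∘ be any quasigroup operation of order k on Fin k. Identify Fin n with the first n elements of Fin (n+k) and, for i ∈ Fin k, write eᵢ for the element n+i of Fin (n+k). Define a binary operation ∗ on Fin (n+k) by: x∗y = x·y for x, y < n with y ∉ {σ₀x, …, σ_{k−1}x}; x∗(σᵢx) = eᵢ for x < n and i ∈ Fin k; x∗eᵢ = x·σᵢx for x < n and i ∈ Fin k; eᵢ∗y = (σᵢ⁻¹y)·y for y < n and i ∈ Fin k; and eᵢ∗eⱼ = e_{i∘j} for i, j ∈ Fin k. Then ∗ is a quasigroup operation of order n+k on Fin (n+k); that is, for every a ∈ Fin (n+k) the maps x ↦ a∗x and x ↦ x∗a are bijections of Fin (n+k). (Yamamoto prolongation along k disjoint transversals.) -/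
theorem Equiv.Perm.apply_inv_self {α : Type*} (f : Equiv.Perm α) (x : α) : f (f⁻¹ x) = x :=
  (Equiv.eq_symm_apply _).mp rfl

/-- **Yamamoto prolongation along `k` disjoint transversals.**  Let `f` be a
quasigroup operation of order `n ≥ 1` on `Fin n`, let `σ 0, …, σ (k-1)` be
pairwise disjoint complete mappings of `(Fin n, f)` (`k ≥ 1`), and let `g` be a
quasigroup operation of order `k` on `Fin k`.  Then the Yamamoto prolongation
`star` (characterized cell-by-cell by `h1`–`h5`, with `Fin n` identified with
the first `n` elements of `Fin (n+k)` via `Fin.castAdd k` and `eᵢ = Fin.natAdd n i`)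
is a quasigroup operation of order `n+k` on `Fin (n+k)`. -/
theorem yamamoto_prolongation_isQuasigroup
    (n k : ℕ) (hn : 1 ≤ n) (hk : 1 ≤ k)
    (f : Fin n → Fin n → Fin n) (hf : IsQuasigroup f)
    (σ : Fin k → Equiv.Perm (Fin n))
    (hσ : ∀ i : Fin k, Function.Bijective (fun x => f x (σ i x)))
    (hdisj : ∀ i j : Fin k, i ≠ j → ∀ x : Fin n, σ i x ≠ σ j x)
    (g : Fin k → Fin k → Fin k) (hg : IsQuasigroup g)
    (star : Fin (n + k) → Fin (n + k) → Fin (n + k))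
    (h1 : ∀ x y : Fin n, (∀ i : Fin k, y ≠ σ i x) →
      star (Fin.castAdd k x) (Fin.castAdd k y) = Fin.castAdd k (f x y))
    (h2 : ∀ (x : Fin n) (i : Fin k),
      star (Fin.castAdd k x) (Fin.castAdd k (σ i x)) = Fin.natAdd n i)
    (h3 : ∀ (x : Fin n) (i : Fin k),
      star (Fin.castAdd k x) (Fin.natAdd n i) = Fin.castAdd k (f x (σ i x)))
    (h4 : ∀ (y : Fin n) (i : Fin k),
      star (Fin.natAdd n i) (Fin.castAdd k y) = Fin.castAdd k (f ((σ i)⁻¹ y) y))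
    (h5 : ∀ i j : Fin k,
      star (Fin.natAdd n i) (Fin.natAdd n j) = Fin.natAdd n (g i j)) :
    IsQuasigroup star := by
  -- basic helper facts
  have hcn : ∀ (x : Fin n) (i : Fin k), Fin.castAdd k x ≠ Fin.natAdd n i := by
    intro x i h
    have h' := congrArg Fin.val h
    simp [Fin.castAdd, Fin.natAdd, Fin.castLE] at h'
    have := x.isLt
    omega
  have hcinj : Function.Injective (Fin.castAdd k : Fin n → Fin (n + k)) := by
    intro a b h
    have h' := congrArg Fin.val h
    exact Fin.ext (by simpa using h')
  have hninj : Function.Injective (Fin.natAdd n : Fin k → Fin (n + k)) := by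
    intro a b h
    have h' := congrArg Fin.val h
    simp [Fin.natAdd] at h'
    exact Fin.ext h'
  have hdisj' : ∀ (i j : Fin k) (x : Fin n), σ i x = σ j x → i = j := by
    intro i j x h
    by_contra hij
    exact hdisj i j hij x h
  have hσdiag : ∀ i0 : Fin k, Function.Injective (fun y : Fin n => f ((σ i0)⁻¹ y) y) := by
    intro i0 a b hab
    have hab' : (fun x => f x (σ i0 x)) ((σ i0)⁻¹ a) = (fun x => f x (σ i0 x)) ((σ i0)⁻¹ b) := by
      simpa [Equiv.Perm.apply_inv_self] using hab
    have := (hσ i0).injective hab'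
    exact ((σ i0)⁻¹).injective this
  intro a
  induction a using Fin.addCases with
  | left x0 =>
    constructor
    · apply Finite.injective_iff_bijective.mp
      intro u v
      dsimp only
      induction u using Fin.addCases with
      | left y1 =>
        induction v using Fin.addCases with
        | left y2 =>
          by_cases hy1 : ∃ i, y1 = σ i x0
          · obtain ⟨i, rfl⟩ := hy1
            by_cases hy2 : ∃ j, y2 = σ j x0
            · obtain ⟨j, rfl⟩ := hy2
              rw [h2, h2]
              intro h
              rw [hninj h]
            · push_neg at hy2
              rw [h2, h1 _ _ hy2]
              intro h
              exact ((hcn _ _) h.symm).elim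
          · push_neg at hy1
            by_cases hy2 : ∃ j, y2 = σ j x0
            · obtain ⟨j, rfl⟩ := hy2
              rw [h1 _ _ hy1, h2]
              intro h
              exact ((hcn _ _) h).elim
            · push_neg at hy2
              rw [h1 _ _ hy1, h1 _ _ hy2]
              intro h
              rw [(hf x0).1.injective (hcinj h)]
        | right j =>
          by_cases hy1 : ∃ i, y1 = σ i x0
          · obtain ⟨i, rfl⟩ := hy1
            rw [h2, h3]
            intro h
            exact ((hcn _ _) h.symm).elim
          · push_neg at hy1
            rw [h1 _ _ hy1, h3]
            intro h
            exact absurd ((hf x0).1.injective (hcinj h)) (hy1 j)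
      | right i =>
        induction v using Fin.addCases with
        | left y2 =>
          by_cases hy2 : ∃ j, y2 = σ j x0
          · obtain ⟨j, rfl⟩ := hy2
            rw [h3, h2]
            intro h
            exact ((hcn _ _) h).elim
          · push_neg at hy2
            rw [h3, h1 _ _ hy2]
            intro h
            exact absurd ((hf x0).1.injective (hcinj h)).symm (hy2 i)
        | right j =>
          rw [h3, h3]
          intro h
          rw [hdisj' i j x0 ((hf x0).1.injective (hcinj h))]
    · apply Finite.injective_iff_bijective.mp
      intro u v
      dsimp only
      induction u using Fin.addCases with
      | left x1 =>
        induction v using Fin.addCases with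
        | left x2 =>
          by_cases hx1 : ∃ i, x0 = σ i x1
          · obtain ⟨i, hi⟩ := hx1
            have eu : star (Fin.castAdd k x1) (Fin.castAdd k x0) = Fin.natAdd n i := by
              rw [hi]; exact h2 x1 i
            by_cases hx2 : ∃ j, x0 = σ j x2
            · obtain ⟨j, hj⟩ := hx2
              have ev : star (Fin.castAdd k x2) (Fin.castAdd k x0) = Fin.natAdd n j := by
                rw [hj]; exact h2 x2 j
              rw [eu, ev]
              intro h
              have hij := hninj h
              subst hij
              have : σ i x1 = σ i x2 := hi.symm.trans hj
              rw [(σ i).injective this]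
            · push_neg at hx2
              rw [eu, h1 _ _ hx2]
              intro h
              exact ((hcn _ _) h.symm).elim
          · push_neg at hx1
            by_cases hx2 : ∃ j, x0 = σ j x2
            · obtain ⟨j, hj⟩ := hx2
              have ev : star (Fin.castAdd k x2) (Fin.castAdd k x0) = Fin.natAdd n j := by
                rw [hj]; exact h2 x2 j
              rw [h1 _ _ hx1, ev]
              intro h
              exact ((hcn _ _) h).elim
            · push_neg at hx2
              rw [h1 _ _ hx1, h1 _ _ hx2]
              intro h
              rw [(hf x0).2.injective (hcinj h)]
        | right j =>
          by_cases hx1 : ∃ i, x0 = σ i x1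
          · obtain ⟨i, hi⟩ := hx1
            have eu : star (Fin.castAdd k x1) (Fin.castAdd k x0) = Fin.natAdd n i := by
              rw [hi]; exact h2 x1 i
            rw [eu, h4]
            intro h
            exact ((hcn _ _) h.symm).elim
          · push_neg at hx1
            rw [h1 _ _ hx1, h4]
            intro h
            have hx : x1 = (σ j)⁻¹ x0 := (hf x0).2.injective (hcinj h)
            have : x0 = σ j x1 := by rw [hx, Equiv.Perm.apply_inv_self]
            exact absurd this (hx1 j)
      | right i =>
        induction v using Fin.addCases with
        | left x2 =>
          by_cases hx2 : ∃ j, x0 = σ j x2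
          · obtain ⟨j, hj⟩ := hx2
            have ev : star (Fin.castAdd k x2) (Fin.castAdd k x0) = Fin.natAdd n j := by
              rw [hj]; exact h2 x2 j
            rw [h4, ev]
            intro h
            exact ((hcn _ _) h).elim
          · push_neg at hx2
            rw [h4, h1 _ _ hx2]
            intro h
            have hx : (σ i)⁻¹ x0 = x2 := (hf x0).2.injective (hcinj h)
            have : x0 = σ i x2 := by rw [← hx, Equiv.Perm.apply_inv_self]
            exact absurd this (hx2 i)
        | right j =>
          rw [h4, h4]
          intro h
          have hx : (σ i)⁻¹ x0 = (σ j)⁻¹ x0 := (hf x0).2.injective (hcinj h)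
          have hsame : σ i ((σ i)⁻¹ x0) = σ j ((σ i)⁻¹ x0) := by
            rw [Equiv.Perm.apply_inv_self, hx, Equiv.Perm.apply_inv_self]
          rw [hdisj' i j _ hsame]
  | right i0 =>
    constructor
    · apply Finite.injective_iff_bijective.mp
      intro u v
      dsimp only
      induction u using Fin.addCases with
      | left y1 =>
        induction v using Fin.addCases with
        | left y2 =>
          rw [h4, h4]
          intro h
          rw [hσdiag i0 (hcinj h)]
        | right j =>
          rw [h4, h5]
          intro h
          exact ((hcn _ _) h).elim
      | right i =>
        induction v using Fin.addCases with
        | left y2 =>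
          rw [h5, h4]
          intro h
          exact ((hcn _ _) h.symm).elim
        | right j =>
          rw [h5, h5]
          intro h
          rw [(hg i0).1.injective (hninj h)]
    · apply Finite.injective_iff_bijective.mp
      intro u v
      dsimp only
      induction u using Fin.addCases with
      | left x1 =>
        induction v using Fin.addCases with
        | left x2 =>
          rw [h3, h3]
          intro h
          rw [(hσ i0).injective (hcinj h)]
        | right j =>
          rw [h3, h5]
          intro h
          exact ((hcn _ _) h).elim
      | right i =>
        induction v using Fin.addCases with
        | left x2 =>
          rw [h5, h3]
          intro h
          exact ((hcn _ _) h.symm).elim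
        | right j =>
          rw [h5, h5]
          intro h
          rw [(hg i0).2.injective (hninj h)]
end

section
/- Let n ≥ 1, let · be a quasigroup operation of order n on Fin n, and let σ and τ be disjoint complete mappings of (Fin n, ·). Let ∗ be the Bruck–Belousov prolongation of (Fin n, ·) along σ, a quasigroup operation on Fin (n+1) with last element e. Define τ' : Fin (n+1) → Fin (n+1) by τ'x = τx for x < n and τ'e = e. Then τ' is a complete mapping of (Fin (n+1), ∗); that is, τ' is a permutation of Fin (n+1) and the map x ↦ x∗τ'x is a bijection of Fin (n+1). -/
theorem Fin.bijective_of_map_castSucc_of_map_last {n : ℕ} {g : Fin n → Fin n}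
    (hg : Function.Injective g) {F : Fin (n + 1) → Fin (n + 1)}
    (hF : ∀ x : Fin n, F x.castSucc = (g x).castSucc) (hlast : F (Fin.last n) = Fin.last n) :
    Function.Bijective F := by
  rw [← Finite.injective_iff_bijective]
  intro a b hab
  induction a using Fin.lastCases <;> induction b using Fin.lastCases <;>
    simp_all [Fin.castSucc_ne_last, hg.eq_iff]

theorem bruck_belousov_prolongation_complete_mapping_general
    (n : ℕ)
    (f : Fin n → Fin n → Fin n)
    (σ τ : Equiv.Perm (Fin n))
    (hτ : Function.Bijective (fun x => f x (τ x)))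
    (hdisj : ∀ x : Fin n, σ x ≠ τ x)
    (star : Fin (n + 1) → Fin (n + 1) → Fin (n + 1))
    (h1 : ∀ x y : Fin n, y ≠ σ x →
      star x.castSucc y.castSucc = (f x y).castSucc)
    (h5 : star (Fin.last n) (Fin.last n) = Fin.last n)
    (τ' : Fin (n + 1) → Fin (n + 1))
    (hτ'1 : ∀ x : Fin n, τ' x.castSucc = (τ x).castSucc)
    (hτ'2 : τ' (Fin.last n) = Fin.last n) :
    Function.Bijective τ' ∧ Function.Bijective (fun x => star x (τ' x)) := by
  refine ⟨Fin.bijective_of_map_castSucc_of_map_last τ.injective hτ'1 hτ'2,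
    Fin.bijective_of_map_castSucc_of_map_last hτ.injective (fun x => ?_) (by simp [hτ'2, h5])⟩
  -- `τ` avoids the cells `(x, σ x)` that the prolongation moves, so `∗` agrees with `·` there.
  simp only [hτ'1, h1 x (τ x) (hdisj x).symm]

/-- Let `f` be a quasigroup operation of order `n ≥ 1` on `Fin n` with disjoint
complete mappings `σ` and `τ`, and let `star` be the Bruck–Belousov prolongation
of `f` along `σ` (characterized cell-by-cell by `h1`–`h5`, with `Fin n`
identified with the first `n` elements of `Fin (n+1)` and `e = Fin.last n`).
Extend `τ` to `τ' : Fin (n+1) → Fin (n+1)` by `τ' x = τ x` for `x < n` and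
`τ' e = e`.  Then `τ'` is a complete mapping of `(Fin (n+1), star)`: `τ'` is a
permutation of `Fin (n+1)` and `x ↦ star x (τ' x)` is a bijection. -/
theorem bruck_belousov_prolongation_complete_mapping
    (n : ℕ) (hn : 1 ≤ n)
    (f : Fin n → Fin n → Fin n) (hf : IsQuasigroup f)
    (σ τ : Equiv.Perm (Fin n))
    (hσ : Function.Bijective (fun x => f x (σ x)))
    (hτ : Function.Bijective (fun x => f x (τ x)))
    (hdisj : ∀ x : Fin n, σ x ≠ τ x)
    (star : Fin (n + 1) → Fin (n + 1) → Fin (n + 1))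
    (h1 : ∀ x y : Fin n, y ≠ σ x →
      star x.castSucc y.castSucc = (f x y).castSucc)
    (h2 : ∀ x : Fin n, star x.castSucc (σ x).castSucc = Fin.last n)
    (h3 : ∀ x : Fin n, star x.castSucc (Fin.last n) = (f x (σ x)).castSucc)
    (h4 : ∀ x : Fin n, star (Fin.last n) (σ x).castSucc = (f x (σ x)).castSucc)
    (h5 : star (Fin.last n) (Fin.last n) = Fin.last n)
    (τ' : Fin (n + 1) → Fin (n + 1))
    (hτ'1 : ∀ x : Fin n, τ' x.castSucc = (τ x).castSucc)
    (hτ'2 : τ' (Fin.last n) = Fin.last n) :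
    Function.Bijective τ' ∧ Function.Bijective (fun x => star x (τ' x)) :=
  bruck_belousov_prolongation_complete_mapping_general n f σ τ hτ hdisj star h1 h5 τ' hτ'1 hτ'2
end

section
/- Let n ≥ 1, let · be a quasigroup operation of order n on Fin n, let σ and τ be disjoint complete mappings of (Fin n, ·), and let x₀ ∈ Fin n. Let ∗ be the Belyavskaya prolongation of (Fin n, ·) along σ with excluded element x₀, a quasigroup operation on Fin (n+1) with last element e. Define τ' : Fin (n+1) → Fin (n+1) by τ'x = τx for x < n and τ'e = e. Then τ' is a quasicomplete mapping of (Fin (n+1), ∗): τ' is a permutation of Fin (n+1), the image of the map x ↦ x∗τ'x is exactly Fin (n+1) \ {e}, and the value x₀·σx₀ is attained by this map at the two distinct arguments e and the unique y < n with τy-value giving x₀·σx₀ (i.e., x₀·σx₀ is attained twice). -/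
namespace Fin

variable {n : ℕ} {g : Fin (n + 1) → Fin (n + 1)} {p : Fin n → Fin n}

theorem bijective_of_castSucc_of_last (hp : Function.Injective p)
    (hcast : ∀ x, g x.castSucc = (p x).castSucc) (hlast : g (last n) = last n) :
    Function.Bijective g := by
  refine Finite.injective_iff_bijective.mp fun a b hab => ?_
  induction a using lastCases <;> induction b using lastCases <;>
    simp_all [castSucc_ne_last, hp.eq_iff]

theorem range_eq_compl_last_of_castSucc (hp : Function.Surjective p)
    (hcast : ∀ x, g x.castSucc = (p x).castSucc) (hlast : g (last n) ≠ last n) :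
    Set.range g = {last n}ᶜ := by
  ext z
  constructor
  · rintro ⟨x, rfl⟩
    induction x using lastCases with
    | last => exact hlast
    | cast x => simp [hcast, castSucc_ne_last]
  · intro hz
    induction z using lastCases with
    | last => exact absurd rfl hz
    | cast z =>
      obtain ⟨x, rfl⟩ := hp z
      exact ⟨x.castSucc, hcast x⟩

end Fin

theorem belyavskaya_prolongation_quasicomplete_mapping_general
    (n : ℕ)
    (f : Fin n → Fin n → Fin n)
    (σ τ : Equiv.Perm (Fin n))
    (hτ : Function.Bijective (fun x => f x (τ x)))
    (hdisj : ∀ x : Fin n, σ x ≠ τ x)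
    (x₀ : Fin n)
    (star : Fin (n + 1) → Fin (n + 1) → Fin (n + 1))
    (h1 : ∀ x y : Fin n, y ≠ σ x →
      star x.castSucc y.castSucc = (f x y).castSucc)
    (h8 : star (Fin.last n) (Fin.last n) = (f x₀ (σ x₀)).castSucc)
    (τ' : Fin (n + 1) → Fin (n + 1))
    (hτ'1 : ∀ x : Fin n, τ' x.castSucc = (τ x).castSucc)
    (hτ'2 : τ' (Fin.last n) = Fin.last n) :
    Function.Bijective τ' ∧
    Set.range (fun x => star x (τ' x)) = {Fin.last n}ᶜ ∧
    star (Fin.last n) (τ' (Fin.last n)) = (f x₀ (σ x₀)).castSucc ∧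
    (∃! y : Fin n, star y.castSucc (τ' y.castSucc) = (f x₀ (σ x₀)).castSucc) := by
  have hcell (x : Fin n) : star x.castSucc (τ' x.castSucc) = (f x (τ x)).castSucc := by
    rw [hτ'1]
    exact h1 x (τ x) (hdisj x).symm
  have hcorner : star (Fin.last n) (τ' (Fin.last n)) = (f x₀ (σ x₀)).castSucc := by
    rw [hτ'2, h8]
  refine ⟨Fin.bijective_of_castSucc_of_last τ.injective hτ'1 hτ'2,
    Fin.range_eq_compl_last_of_castSucc hτ.2 hcell (hcorner ▸ Fin.castSucc_ne_last _),
    hcorner, ?_⟩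
  simp_rw [hcell, Fin.castSucc_inj]
  exact hτ.existsUnique _

/-- Let `f` be a quasigroup operation of order `n ≥ 1` on `Fin n` with disjoint
complete mappings `σ` and `τ`, let `x₀ ∈ Fin n`, and let `star` be the
Belyavskaya prolongation of `f` along `σ` with excluded element `x₀`
(characterized cell-by-cell by `h1`–`h8`, with `Fin n` identified with the first
`n` elements of `Fin (n+1)` and `e = Fin.last n`).  Extend `τ` to
`τ' : Fin (n+1) → Fin (n+1)` by `τ' x = τ x` for `x < n` and `τ' e = e`.
Then `τ'` is a quasicomplete mapping of `(Fin (n+1), star)`: `τ'` is a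
permutation, the image of `x ↦ star x (τ' x)` is exactly `Fin (n+1) \ {e}`, and
the value `f x₀ (σ x₀)` is attained by this map at `e` and at a unique argument
`y < n` (so it is attained at two distinct arguments). -/
theorem belyavskaya_prolongation_quasicomplete_mapping
    (n : ℕ) (hn : 1 ≤ n)
    (f : Fin n → Fin n → Fin n) (hf : IsQuasigroup f)
    (σ τ : Equiv.Perm (Fin n))
    (hσ : Function.Bijective (fun x => f x (σ x)))
    (hτ : Function.Bijective (fun x => f x (τ x)))
    (hdisj : ∀ x : Fin n, σ x ≠ τ x)
    (x₀ : Fin n)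
    (star : Fin (n + 1) → Fin (n + 1) → Fin (n + 1))
    (h1 : ∀ x y : Fin n, y ≠ σ x →
      star x.castSucc y.castSucc = (f x y).castSucc)
    (h2 : ∀ x : Fin n, x ≠ x₀ → star x.castSucc (σ x).castSucc = Fin.last n)
    (h3 : ∀ x : Fin n, x ≠ x₀ →
      star x.castSucc (Fin.last n) = (f x (σ x)).castSucc)
    (h4 : ∀ x : Fin n, x ≠ x₀ →
      star (Fin.last n) (σ x).castSucc = (f x (σ x)).castSucc)
    (h5 : star x₀.castSucc (σ x₀).castSucc = (f x₀ (σ x₀)).castSucc)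
    (h6 : star x₀.castSucc (Fin.last n) = Fin.last n)
    (h7 : star (Fin.last n) (σ x₀).castSucc = Fin.last n)
    (h8 : star (Fin.last n) (Fin.last n) = (f x₀ (σ x₀)).castSucc)
    (τ' : Fin (n + 1) → Fin (n + 1))
    (hτ'1 : ∀ x : Fin n, τ' x.castSucc = (τ x).castSucc)
    (hτ'2 : τ' (Fin.last n) = Fin.last n) :
    Function.Bijective τ' ∧
    Set.range (fun x => star x (τ' x)) = {Fin.last n}ᶜ ∧
    star (Fin.last n) (τ' (Fin.last n)) = (f x₀ (σ x₀)).castSucc ∧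
    (∃! y : Fin n, star y.castSucc (τ' y.castSucc) = (f x₀ (σ x₀)).castSucc) :=
  belyavskaya_prolongation_quasicomplete_mapping_general n f σ τ hτ hdisj x₀ star h1 h8 τ' hτ'1 hτ'2
end

section
/- Let n ≥ 1, let · be a quasigroup operation of order n on Fin n, and suppose (Fin n, ·) has two disjoint complete mappings σ and τ. Then there exists a quasigroup operation ∗ of order n+2 on Fin (n+2) such that, identifying Fin n with the first n elements of Fin (n+2), x∗y = x·y for all x, y < n with y ≠ σx and y ≠ τx (i.e., the prolonged quasigroup agrees with the original one on all cells not lying on the two transversals). -/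
open Function Equiv Sum

namespace TwoStepProlongation

variable {α : Type*} [DecidableEq α]

def prolongRow (g : α → α) (p : Fin 2 → α) : α ⊕ Fin 2 → α ⊕ Fin 2
  | inl b => if b = p 0 then inr 0 else if b = p 1 then inr 1 else inl (g b)
  | inr i => inl (g (p i))

theorem prolongRow_eq_comp (g : α → α) {p : Fin 2 → α} (hp : p 0 ≠ p 1) :
    prolongRow g p = Sum.map g id ∘
      ⇑(swap (inl (p 0)) (inr 0) * swap (inl (p 1)) (inr 1) : Perm (α ⊕ Fin 2)) := by
  funext b
  rcases b with b | i
  · by_cases h0 : b = p 0 <;> by_cases h1 : b = p 1 <;>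
      simp_all [prolongRow, swap_apply_def]
  · fin_cases i <;> simp [prolongRow, swap_apply_def, hp.symm]

theorem bijective_prolongRow {g : α → α} (hg : Bijective g) {p : Fin 2 → α} (hp : p 0 ≠ p 1) :
    Bijective (prolongRow g p) := by
  rw [prolongRow_eq_comp g hp]
  exact (hg.sumMap bijective_id).comp (Equiv.bijective _)

def prolong (f : α → α → α) (π : Fin 2 → Perm α) : α ⊕ Fin 2 → α ⊕ Fin 2 → α ⊕ Fin 2
  | inl x, b => prolongRow (f x) (fun i => π i x) b
  | inr i, inl y => inl (f ((π i).symm y) y)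
  | inr i, inr j => inr (i + j)

variable {f : α → α → α} {π : Fin 2 → Perm α}

theorem prolong_inl_inl {x y : α} (h0 : y ≠ π 0 x) (h1 : y ≠ π 1 x) :
    prolong f π (inl x) (inl y) = inl (f x y) := by
  simp [prolong, prolongRow, h0, h1]

theorem prolong_inr_row (i : Fin 2) :
    prolong f π (inr i) = Sum.map (fun y => f ((π i).symm y) y) (i + ·) := by
  funext b; cases b <;> rfl

theorem prolong_inl_col (y : α) :
    (prolong f π · (inl y)) = prolongRow (f · y) (fun i => (π i).symm y) := by
  funext a
  rcases a with x | i
  · simp only [prolong, prolongRow, eq_comm (a := y), Equiv.eq_symm_apply]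
  · rfl

theorem prolong_inr_col (j : Fin 2) :
    (prolong f π · (inr j)) = Sum.map (fun x => f x (π j x)) (· + j) := by
  funext a; cases a <;> rfl

theorem bijective_prolong_row (hrow : ∀ x, Bijective (f x))
    (hπ : ∀ i, Bijective (fun x => f x (π i x))) (hdisj : ∀ x, π 0 x ≠ π 1 x) (a : α ⊕ Fin 2) :
    Bijective (prolong f π a) := by
  rcases a with x | i
  · exact bijective_prolongRow (p := fun i => π i x) (hrow x) (hdisj x)
  · have hdiag : Bijective (fun y => f ((π i).symm y) y) := by
      simpa [comp_def] using (hπ i).comp (π i).symm.bijective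
    rw [prolong_inr_row]
    exact hdiag.sumMap (Equiv.addLeft i).bijective

theorem bijective_prolong_col (hcol : ∀ y, Bijective (f · y))
    (hπ : ∀ i, Bijective (fun x => f x (π i x))) (hdisj : ∀ x, π 0 x ≠ π 1 x) (b : α ⊕ Fin 2) :
    Bijective (prolong f π · b) := by
  rcases b with y | j
  · rw [prolong_inl_col]
    refine bijective_prolongRow (hcol y) fun h => hdisj ((π 1).symm y) ?_
    rw [apply_symm_apply, ← h, apply_symm_apply]
  · rw [prolong_inr_col]
    exact (hπ j).sumMap (Equiv.addRight j).bijective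

end TwoStepProlongation

open TwoStepProlongation

theorem isQuasigroup_of_equiv {β : Type*} {m : ℕ} (e : β ≃ Fin m) {op : β → β → β}
    (hrow : ∀ a, Bijective (op a)) (hcol : ∀ b, Bijective (op · b)) :
    IsQuasigroup fun a b => e (op (e.symm a) (e.symm b)) := fun _ =>
  ⟨e.bijective.comp ((hrow _).comp e.symm.bijective),
    e.bijective.comp ((hcol _).comp e.symm.bijective)⟩

theorem two_step_prolongation_exists_general
    (n : ℕ)
    (f : Fin n → Fin n → Fin n) (hf : IsQuasigroup f)
    (σ τ : Equiv.Perm (Fin n))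
    (hσ : Function.Bijective (fun x => f x (σ x)))
    (hτ : Function.Bijective (fun x => f x (τ x)))
    (hdisj : ∀ x : Fin n, σ x ≠ τ x) :
    ∃ star : Fin (n + 2) → Fin (n + 2) → Fin (n + 2),
      IsQuasigroup star ∧
      ∀ x y : Fin n, y ≠ σ x → y ≠ τ x →
        star (Fin.castAdd 2 x) (Fin.castAdd 2 y) = Fin.castAdd 2 (f x y) := by
  have hπ : ∀ i, Bijective fun x => f x (![σ, τ] i x) := Fin.forall_fin_two.2 ⟨hσ, hτ⟩
  refine ⟨fun a b => finSumFinEquiv (prolong f ![σ, τ] (finSumFinEquiv.symm a)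
      (finSumFinEquiv.symm b)), isQuasigroup_of_equiv _
      (bijective_prolong_row (fun x => (hf x).1) hπ hdisj)
      (bijective_prolong_col (fun y => (hf y).2) hπ hdisj), fun x y h0 h1 => ?_⟩
  simp only [finSumFinEquiv_symm_apply_castAdd]
  rw [prolong_inl_inl h0 h1, finSumFinEquiv_apply_left]

/-- **Two-step prolongation.**  Let `f` be a quasigroup operation of order
`n ≥ 1` on `Fin n` possessing two disjoint complete mappings `σ` and `τ`.
Then there is a quasigroup operation `star` of order `n+2` on `Fin (n+2)`
which agrees with `f` on all cells of the original Latin square not lying on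
the two transversals (identifying `Fin n` with the first `n` elements of
`Fin (n+2)` via `Fin.castAdd 2`). -/
theorem two_step_prolongation_exists
    (n : ℕ) (hn : 1 ≤ n)
    (f : Fin n → Fin n → Fin n) (hf : IsQuasigroup f)
    (σ τ : Equiv.Perm (Fin n))
    (hσ : Function.Bijective (fun x => f x (σ x)))
    (hτ : Function.Bijective (fun x => f x (τ x)))
    (hdisj : ∀ x : Fin n, σ x ≠ τ x) :
    ∃ star : Fin (n + 2) → Fin (n + 2) → Fin (n + 2),
      IsQuasigroup star ∧
      ∀ x y : Fin n, y ≠ σ x → y ≠ τ x →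
        star (Fin.castAdd 2 x) (Fin.castAdd 2 y) = Fin.castAdd 2 (f x y) :=
  two_step_prolongation_exists_general n f hf σ τ hσ hτ hdisj
end
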